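/- arXiv:1405.6805 — 2 statements merged into one kernel-verified Lean document; each statement's English description precedes it below -/
import Mathlib

section
/- Let σ > 0 and let p ≥ 2. Let Z_1, …, Z_p be i.i.d. N(0, σ²) random variables, and let V₁ and V₂ denote the largest and second largest values among |Z_1|, …, |Z_p|. Then the statistic R = (1 − Φ(V₁/σ))/(1 − Φ(V₂/σ)) is exactly uniformly distributed on [0,1]; that is, for every t ∈ [0,1], ℙ(R ≤ t) = t. -/
/-!
The two-sided p-values `Pᵢ = 2 (1 - Φ(|Zᵢ|/σ))` are i.i.d. uniform on `(0, 1]`, and the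
statistic is the ratio of the smallest to the second smallest of them. For `t < 1` it is at
most `t` exactly when some `Pᵢ` is at most `t Pⱼ` for every `j ≠ i`. These `p` events are
disjoint up to null sets and, integrating out `Pᵢ`, each has probability
`∫₀ᵗ (1 - a/t)^(p-1) da = t/p`.
-/

open MeasureTheory ProbabilityTheory Filter

/-- The standard normal cumulative distribution function `Φ`. -/
noncomputable def stdNormalCDF (x : ℝ) : ℝ :=
  ((gaussianReal 0 1) (Set.Iic x)).toReal

/-- The largest of the values `|x 0|, …, |x (p-1)|`. -/
noncomputable def V1 (p : ℕ) (x : Fin p → ℝ) : ℝ :=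
  ⨆ i : Fin p, |x i|

/-- The second largest of the values `|x 0|, …, |x (p-1)|` (counted with multiplicity),
realized as the maximum over distinct pairs of the minimum of the pair. -/
noncomputable def V2 (p : ℕ) (x : Fin p → ℝ) : ℝ :=
  ⨆ i : Fin p, ⨆ j : Fin p, ⨆ _ : i ≠ j, min |x i| |x j|

open Set
open scoped NNReal

namespace ProbabilityTheory

variable {μ : Measure ℝ} [IsProbabilityMeasure μ]

lemma continuous_cdf [NullSingletonClass μ] : Continuous (cdf μ) := by
  refine continuous_iff_continuousAt.2 fun x => continuousAt_iff_continuous_left_right.2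
    ⟨?_, (cdf μ).right_continuous x⟩
  have hsing := (cdf μ).measure_singleton x
  rw [measure_cdf, measure_singleton, eq_comm, ENNReal.ofReal_eq_zero, sub_nonpos] at hsing
  rw [← continuousWithinAt_Iio_iff_Iic, (monotone_cdf μ).continuousWithinAt_Iio_iff_leftLim_eq]
  exact le_antisymm ((monotone_cdf μ).leftLim_le le_rfl) hsing

lemma strictMono_cdf (h : volume ≪ μ) : StrictMono (cdf μ) := by
  intro a b hab
  have hIoc := (cdf μ).measure_Ioc a b
  rw [measure_cdf] at hIoc
  have : μ (Ioc a b) ≠ 0 := fun h0 => hab.not_ge (by simpa using h h0)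
  rwa [hIoc, ne_eq, ENNReal.ofReal_eq_zero, not_le, sub_pos] at this

end ProbabilityTheory

instance : NullSingletonClass (gaussianReal 0 1) := nullSingletonClass_gaussianReal one_ne_zero

lemma stdNormalCDF_eq_cdf : stdNormalCDF = cdf (gaussianReal 0 1) := by
  ext x; rw [cdf_eq_real]; rfl

lemma gaussianReal_Ici_eq_Iic_neg (x : ℝ) :
    gaussianReal 0 1 (Ici x) = gaussianReal 0 1 (Iic (-x)) := by
  conv_rhs =>
    rw [← neg_zero, ← gaussianReal_map_neg, Measure.map_apply measurable_neg measurableSet_Iic]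
  simp

lemma continuous_stdNormalCDF : Continuous stdNormalCDF :=
  stdNormalCDF_eq_cdf ▸ continuous_cdf

lemma strictMono_stdNormalCDF : StrictMono stdNormalCDF :=
  stdNormalCDF_eq_cdf ▸ strictMono_cdf (gaussianReal_absolutelyContinuous' 0 one_ne_zero)

lemma stdNormalCDF_neg (x : ℝ) : stdNormalCDF (-x) = 1 - stdNormalCDF x := by
  rw [stdNormalCDF, ← gaussianReal_Ici_eq_Iic_neg, ← Ioi_ae_eq_Ici.measure_eq, ← compl_Iic,
    prob_compl_eq_one_sub measurableSet_Iic,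
    ENNReal.toReal_sub_of_le prob_le_one ENNReal.one_ne_top]
  rfl

lemma stdNormalCDF_zero : stdNormalCDF 0 = 1 / 2 := by
  linarith [neg_zero (G := ℝ) ▸ stdNormalCDF_neg 0]

lemma stdNormalCDF_lt_one (x : ℝ) : stdNormalCDF x < 1 :=
  (strictMono_stdNormalCDF (lt_add_one x)).trans_le (stdNormalCDF_eq_cdf ▸ cdf_le_one _ _)

lemma exists_stdNormalCDF_eq {u : ℝ} (hu : u ∈ Ioo 0 1) : ∃ x, stdNormalCDF x = u := by
  rw [stdNormalCDF_eq_cdf]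
  obtain ⟨a, ha⟩ := ((tendsto_cdf_atBot _).eventually (gt_mem_nhds hu.1)).exists
  obtain ⟨b, hb⟩ := ((tendsto_cdf_atTop _).eventually (lt_mem_nhds hu.2)).exists
  exact mem_range_of_exists_le_of_exists_ge continuous_cdf ⟨a, ha.le⟩ ⟨b, hb.le⟩

noncomputable def uniformIoc : Measure ℝ := volume.restrict (Ioc 0 1)

instance : IsProbabilityMeasure uniformIoc := ⟨by simp [uniformIoc]⟩

lemma uniformIoc_Iic (u : ℝ) : uniformIoc (Iic u) = ENNReal.ofReal (min 1 u) := by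
  rw [uniformIoc, Measure.restrict_apply measurableSet_Iic, inter_comm, Ioc_inter_Iic,
    Real.volume_Ioc, sub_zero]

lemma uniformIoc_Ici {s : ℝ} (hs : 0 < s) : uniformIoc (Ici s) = ENNReal.ofReal (1 - s) := by
  have : Ici s ∩ Ioc 0 1 = Icc s 1 := by
    ext r; simp only [mem_inter_iff, mem_Ici, mem_Ioc, mem_Icc]; grind
  rw [uniformIoc, Measure.restrict_apply measurableSet_Ici, this, Real.volume_Icc]

noncomputable def twoSidedPValue (z : ℝ) : ℝ := 2 * (1 - stdNormalCDF |z|)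

lemma twoSidedPValue_pos (z : ℝ) : 0 < twoSidedPValue z := by
  have := stdNormalCDF_lt_one |z|
  unfold twoSidedPValue; linarith

lemma twoSidedPValue_le_one (z : ℝ) : twoSidedPValue z ≤ 1 := by
  have := strictMono_stdNormalCDF.monotone (abs_nonneg z)
  rw [stdNormalCDF_zero] at this
  unfold twoSidedPValue; linarith

lemma twoSidedPValue_le_of_abs_le {a b : ℝ} (h : |a| ≤ |b|) :
    twoSidedPValue b ≤ twoSidedPValue a := by
  have := strictMono_stdNormalCDF.monotone h
  unfold twoSidedPValue; linarith

lemma measurable_twoSidedPValue : Measurable twoSidedPValue :=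
  measurable_const.mul (measurable_const.sub
    (strictMono_stdNormalCDF.monotone.measurable.comp measurable_abs))

lemma twoSidedPValue_le_two_mul_stdNormalCDF_iff {x : ℝ} (z : ℝ) :
    twoSidedPValue z ≤ 2 * stdNormalCDF x ↔ z ≤ x ∨ -x ≤ z := by
  rw [twoSidedPValue, ← stdNormalCDF_neg, mul_le_mul_iff_right₀ two_pos,
    strictMono_stdNormalCDF.le_iff_le, neg_le, le_abs', neg_neg]

lemma map_twoSidedPValue_gaussianReal : (gaussianReal 0 1).map twoSidedPValue = uniformIoc := by
  refine Measure.ext_of_Iic _ _ fun u => ?_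
  rw [Measure.map_apply measurable_twoSidedPValue measurableSet_Iic, uniformIoc_Iic]
  rcases le_or_gt u 0 with hu0 | hu0
  · rw [min_eq_right (hu0.trans zero_le_one), ENNReal.ofReal_of_nonpos hu0,
      ← measure_empty (μ := gaussianReal 0 1)]
    congr 1
    exact eq_empty_of_forall_notMem fun z hz => (twoSidedPValue_pos z).not_ge (le_trans hz hu0)
  rcases le_or_gt 1 u with hu1 | hu1
  · rw [min_eq_left hu1, ENNReal.ofReal_one, ← measure_univ (μ := gaussianReal 0 1)]
    congr 1
    exact eq_univ_of_forall fun z => (twoSidedPValue_le_one z).trans hu1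
  obtain ⟨x, hx⟩ := exists_stdNormalCDF_eq (u := u / 2) ⟨by linarith, by linarith⟩
  have hx0 : x < -x := by
    have : x < 0 := strictMono_stdNormalCDF.lt_iff_lt.1 (by rw [hx, stdNormalCDF_zero]; linarith)
    linarith
  have hpre : twoSidedPValue ⁻¹' Iic u = Iic x ∪ Ici (-x) := by
    ext z
    simpa [hx, mul_div_cancel₀] using twoSidedPValue_le_two_mul_stdNormalCDF_iff (x := x) z
  rw [hpre, measure_union (Iic_disjoint_Ici.2 hx0.not_ge) measurableSet_Ici,
    gaussianReal_Ici_eq_Iic_neg, neg_neg, ← ofReal_cdf, ← stdNormalCDF_eq_cdf, hx,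
    ← ENNReal.ofReal_add (by linarith) (by linarith), min_eq_right hu1.le]
  ring_nf

lemma integral_one_sub_div_pow (n : ℕ) {t : ℝ} (ht : t ≠ 0) :
    ∫ a in (0 : ℝ)..t, (1 - a / t) ^ n = t / (n + 1) := by
  rw [intervalIntegral.integral_comp_div (fun y => (1 - y) ^ n) ht,
    intervalIntegral.integral_comp_sub_left (fun y => y ^ n)]
  simp [ht, integral_pow, div_eq_mul_inv]

lemma lintegral_uniformIoc_setOf_le_mul_pow {t : ℝ} (ht0 : 0 < t) (ht1 : t ≤ 1) {n : ℕ}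
    (hn : n ≠ 0) :
    ∫⁻ a, uniformIoc {r | a ≤ t * r} ^ n ∂uniformIoc = ENNReal.ofReal (t / (n + 1)) := by
  have hset (a : ℝ) : {r | a ≤ t * r} = Ici (a / t) := by
    ext r; rw [mem_Ici, div_le_iff₀ ht0, mul_comm]; rfl
  have hIoc : ∀ a ∈ Ioc (0 : ℝ) 1,
      uniformIoc {r | a ≤ t * r} ^ n = ENNReal.ofReal (1 - a / t) ^ n :=
    fun a ha => by rw [hset, uniformIoc_Ici (div_pos ha.1 ht0)]
  have hnonneg : ∀ a ∈ Ioc 0 t, 0 ≤ 1 - a / t := fun a ha => by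
    rw [sub_nonneg, div_le_one ht0]; exact ha.2
  have hIoc_t : ∀ a ∈ Ioc 0 t,
      ENNReal.ofReal (1 - a / t) ^ n = ENNReal.ofReal ((1 - a / t) ^ n) :=
    fun a ha => (ENNReal.ofReal_pow (hnonneg a ha) n).symm
  have hIoc_1 : ∀ a ∈ Ioc t 1, ENNReal.ofReal (1 - a / t) ^ n = 0 := fun a ha => by
    rw [ENNReal.ofReal_of_nonpos (by rw [sub_nonpos, le_div_iff₀ ht0]; linarith [ha.1]),
      zero_pow hn]
  change ∫⁻ a in Ioc 0 1, _ = _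
  rw [setLIntegral_congr_fun measurableSet_Ioc hIoc, ← Ioc_union_Ioc_eq_Ioc ht0.le ht1,
    lintegral_union measurableSet_Ioc (Ioc_disjoint_Ioc_of_le le_rfl),
    setLIntegral_congr_fun measurableSet_Ioc hIoc_t,
    setLIntegral_congr_fun measurableSet_Ioc hIoc_1, lintegral_zero, add_zero,
    ← ofReal_integral_eq_lintegral_ofReal, ← intervalIntegral.integral_of_le ht0.le,
    integral_one_sub_div_pow n ht0.ne']
  · exact (by fun_prop : Continuous fun a : ℝ => (1 - a / t) ^ n).integrableOn_Ioc
  · exact ae_restrict_of_forall_mem measurableSet_Ioc fun a ha => pow_nonneg (hnonneg a ha) n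

lemma measurableSet_forall_ne_le_mul {ι : Type*} [Countable ι] (t : ℝ) (i : ι) :
    MeasurableSet {v : ι → ℝ | ∀ j ≠ i, v i ≤ t * v j} := by
  simp only [ofPred_forall]
  exact .iInter fun j => .iInter fun _ => measurableSet_le (by fun_prop) (by fun_prop)

lemma measurableSet_exists_forall_ne_le_mul {ι : Type*} [Countable ι] (t : ℝ) :
    MeasurableSet {v : ι → ℝ | ∃ i, ∀ j ≠ i, v i ≤ t * v j} := by
  rw [ofPred_exists]
  exact .iUnion (measurableSet_forall_ne_le_mul t)

lemma pi_uniformIoc_forall_ne_le_mul {n : ℕ} (hn : n ≠ 0) {t : ℝ} (ht0 : 0 < t) (ht1 : t ≤ 1)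
    (i : Fin (n + 1)) :
    Measure.pi (fun _ => uniformIoc) {v : Fin (n + 1) → ℝ | ∀ j ≠ i, v i ≤ t * v j}
      = ENNReal.ofReal (t / (n + 1)) := by
  set T : Set (ℝ × (Fin n → ℝ)) := {q | ∀ k, q.1 ≤ t * q.2 k}
  have hT : MeasurableSet T := by
    simp only [T, ofPred_forall]
    exact .iInter fun k => measurableSet_le (by fun_prop) (by fun_prop)
  have hpre : {v : Fin (n + 1) → ℝ | ∀ j ≠ i, v i ≤ t * v j}
      = MeasurableEquiv.piFinSuccAbove (fun _ => ℝ) i ⁻¹' T := by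
    ext v
    simp [T, Fin.forall_iff_succAbove i, Fin.succAbove_ne, Fin.removeNth]
  have hsection (a : ℝ) : Prod.mk a ⁻¹' T = univ.pi fun _ => {r | a ≤ t * r} := by
    ext; simp [T]
  rw [hpre, (measurePreserving_piFinSuccAbove _ i).measure_preimage hT.nullMeasurableSet,
    Measure.prod_apply hT]
  simp only [hsection, Measure.pi_pi, Finset.prod_const, Finset.card_univ, Fintype.card_fin]
  exact lintegral_uniformIoc_setOf_le_mul_pow ht0 ht1 hn

lemma pi_uniformIoc_exists_forall_ne_le_mul {n : ℕ} (hn : n ≠ 0) {t : ℝ} (ht0 : 0 < t)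
    (ht1 : t < 1) :
    Measure.pi (fun _ => uniformIoc) {v : Fin (n + 1) → ℝ | ∃ i, ∀ j ≠ i, v i ≤ t * v j}
      = ENNReal.ofReal t := by
  have hdisj : Pairwise (Function.onFun (AEDisjoint (Measure.pi fun _ => uniformIoc))
      fun i : Fin (n + 1) => {v : Fin (n + 1) → ℝ | ∀ j ≠ i, v i ≤ t * v j}) := by
    intro i k hik
    refine measure_mono_null (t := Function.eval i ⁻¹' Iic 0) ?_ ?_
    · rintro v ⟨hvi, hvk⟩
      have := (hvi k hik.symm).trans (mul_le_mul_of_nonneg_left (hvk i hik) ht0.le)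
      have ht2 : t * t < 1 := by nlinarith
      show v i ≤ 0
      by_contra! hpos
      nlinarith [mul_lt_mul_of_pos_right ht2 hpos]
    · rw [(measurePreserving_eval _ i).measure_preimage measurableSet_Iic.nullMeasurableSet,
        uniformIoc_Iic, min_eq_right zero_le_one, ENNReal.ofReal_zero]
  rw [ofPred_exists,
    measure_iUnion₀ hdisj fun i => (measurableSet_forall_ne_le_mul t i).nullMeasurableSet,
    tsum_fintype]
  simp only [pi_uniformIoc_forall_ne_le_mul hn ht0 ht1.le, Finset.sum_const, Finset.card_univ,
    Fintype.card_fin, nsmul_eq_mul]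
  rw [← ENNReal.ofReal_natCast, ← ENNReal.ofReal_mul (by positivity)]
  congr 1
  push_cast
  field_simp

lemma div_le_iff_exists_forall_ne_le_mul {ι : Type*} {y : ι → ℝ} (hy : ∀ i, 0 < y i)
    {i₀ i₁ : ι} (hne : i₁ ≠ i₀) (h₀ : ∀ i, y i₀ ≤ y i) (h₁ : ∀ j ≠ i₀, y i₁ ≤ y j) {t : ℝ}
    (ht0 : 0 ≤ t) (ht1 : t < 1) :
    y i₀ / y i₁ ≤ t ↔ ∃ i, ∀ j ≠ i, y i ≤ t * y j := by
  rw [div_le_iff₀ (hy i₁)]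
  constructor
  · exact fun h => ⟨i₀, fun j hj => h.trans (mul_le_mul_of_nonneg_left (h₁ j hj) ht0)⟩
  · rintro ⟨i, hi⟩
    rcases eq_or_ne i i₀ with rfl | hi₀
    · exact hi i₁ hne
    · exact absurd (hi i₀ hi₀.symm)
        ((mul_lt_of_lt_one_left (hy i₀) ht1).trans_le (h₀ i)).not_ge

lemma Finite.exists_max_and_max_ne {ι α : Type*} [Finite ι] [Nontrivial ι] [LinearOrder α]
    (f : ι → α) :
    ∃ i₀ i₁, i₁ ≠ i₀ ∧ (∀ i, f i ≤ f i₀) ∧ ∀ j ≠ i₀, f j ≤ f i₁ := by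
  obtain ⟨i₀, h₀⟩ := Finite.exists_max f
  have : Nonempty {j // j ≠ i₀} := nonempty_subtype.2 (exists_ne i₀)
  obtain ⟨⟨i₁, hne⟩, h₁⟩ := Finite.exists_max fun j : {j // j ≠ i₀} => f j
  exact ⟨i₀, i₁, hne, h₀, fun j hj => h₁ ⟨j, hj⟩⟩

lemma V1_eq_of_forall_le {p : ℕ} {x : Fin p → ℝ} {i₀ : Fin p} (h₀ : ∀ i, |x i| ≤ |x i₀|) :
    V1 p x = |x i₀| :=
  have : Nonempty (Fin p) := ⟨i₀⟩
  le_antisymm (ciSup_le h₀) (le_ciSup (f := fun i => |x i|) (finite_range _).bddAbove i₀)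

lemma V2_eq_of_forall_ne_le {p : ℕ} {x : Fin p → ℝ} {i₀ i₁ : Fin p} (hne : i₁ ≠ i₀)
    (h₀ : ∀ i, |x i| ≤ |x i₀|) (h₁ : ∀ j ≠ i₀, |x j| ≤ |x i₁|) :
    V2 p x = |x i₁| := by
  refine le_antisymm ?_ ?_
  · refine Real.iSup_le (fun i => Real.iSup_le (fun j => Real.iSup_le (fun hij => ?_)
      (abs_nonneg _)) (abs_nonneg _)) (abs_nonneg _)
    rcases eq_or_ne i i₀ with rfl | hi
    · exact (min_le_right _ _).trans (h₁ j hij.symm)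
    · exact (min_le_left _ _).trans (h₁ i hi)
  · calc |x i₁| = ⨆ _ : i₀ ≠ i₁, min |x i₀| |x i₁| := by
          rw [ciSup_pos hne.symm, min_eq_right (h₀ i₁)]
      _ ≤ ⨆ j, ⨆ _ : i₀ ≠ j, min |x i₀| |x j| :=
          le_ciSup (f := fun j => ⨆ _ : i₀ ≠ j, min |x i₀| |x j|) (finite_range _).bddAbove i₁
      _ ≤ V2 p x :=
          le_ciSup (f := fun i => ⨆ j, ⨆ _ : i ≠ j, min |x i| |x j|) (finite_range _).bddAbove i₀

noncomputable def spacingStat (σ : ℝ) {p : ℕ} (x : Fin p → ℝ) : ℝ :=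
  (1 - stdNormalCDF (V1 p x / σ)) / (1 - stdNormalCDF (V2 p x / σ))

lemma spacingStat_pos (σ : ℝ) {p : ℕ} (x : Fin p → ℝ) : 0 < spacingStat σ x :=
  div_pos (sub_pos.2 (stdNormalCDF_lt_one _)) (sub_pos.2 (stdNormalCDF_lt_one _))

lemma exists_spacingStat_eq_div {σ : ℝ} (hσ : 0 < σ) {p : ℕ} (hp : 2 ≤ p) (x : Fin p → ℝ) :
    ∃ i₀ i₁, i₁ ≠ i₀ ∧ (∀ i, twoSidedPValue (x i₀ / σ) ≤ twoSidedPValue (x i / σ)) ∧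
      (∀ j ≠ i₀, twoSidedPValue (x i₁ / σ) ≤ twoSidedPValue (x j / σ)) ∧
      spacingStat σ x = twoSidedPValue (x i₀ / σ) / twoSidedPValue (x i₁ / σ) := by
  have : Nontrivial (Fin p) := Fin.nontrivial_iff_two_le.2 hp
  obtain ⟨i₀, i₁, hne, h₀, h₁⟩ := Finite.exists_max_and_max_ne fun i => |x i|
  have habs (i : Fin p) : |x i / σ| = |x i| / σ := by rw [abs_div, abs_of_pos hσ]
  have hanti {i j : Fin p} (h : |x i| ≤ |x j|) :
      twoSidedPValue (x j / σ) ≤ twoSidedPValue (x i / σ) :=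
    twoSidedPValue_le_of_abs_le (by rw [habs, habs]; exact div_le_div_of_nonneg_right h hσ.le)
  refine ⟨i₀, i₁, hne, fun i => hanti (h₀ i), fun j hj => hanti (h₁ j hj), ?_⟩
  rw [spacingStat, V1_eq_of_forall_le h₀, V2_eq_of_forall_ne_le hne h₀ h₁, twoSidedPValue,
    twoSidedPValue, habs, habs, mul_div_mul_left _ _ two_ne_zero]

lemma spacingStat_le_one {σ : ℝ} (hσ : 0 < σ) {p : ℕ} (hp : 2 ≤ p) (x : Fin p → ℝ) :
    spacingStat σ x ≤ 1 := by
  obtain ⟨i₀, i₁, -, h₀, -, hstat⟩ := exists_spacingStat_eq_div hσ hp x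
  rw [hstat]
  exact div_le_one_of_le₀ (h₀ i₁) (twoSidedPValue_pos _).le

lemma spacingStat_le_iff {σ : ℝ} (hσ : 0 < σ) {p : ℕ} (hp : 2 ≤ p) (x : Fin p → ℝ) {t : ℝ}
    (ht0 : 0 ≤ t) (ht1 : t < 1) :
    spacingStat σ x ≤ t ↔
      ∃ i, ∀ j ≠ i, twoSidedPValue (x i / σ) ≤ t * twoSidedPValue (x j / σ) := by
  obtain ⟨i₀, i₁, hne, h₀, h₁, hstat⟩ := exists_spacingStat_eq_div hσ hp x
  rw [hstat]
  exact div_le_iff_exists_forall_ne_le_mul (y := fun i => twoSidedPValue (x i / σ))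
    (fun _ => twoSidedPValue_pos _) hne h₀ h₁ ht0 ht1

lemma hasLaw_twoSidedPValue_div {Ω : Type*} [MeasurableSpace Ω] {μ : Measure Ω} {Z : Ω → ℝ}
    {σ : ℝ} {v : ℝ≥0} (hσ : 0 < σ) (hv : (v : ℝ) = σ ^ 2)
    (hZ : HasLaw Z (gaussianReal 0 v) μ) :
    HasLaw (fun ω => twoSidedPValue (Z ω / σ)) uniformIoc μ := by
  have hstd : HasLaw (fun ω => Z ω / σ) (gaussianReal 0 1) μ := by
    convert gaussianReal_div_const hZ σ
    · simp
    · ext; simp [hv, hσ.ne']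
  exact HasLaw.fun_comp (Y := twoSidedPValue)
    ⟨measurable_twoSidedPValue.aemeasurable, map_twoSidedPValue_gaussianReal⟩ hstd

theorem stmt0_general {Ω : Type*} [MeasurableSpace Ω] (μ : Measure Ω)
    (σ : ℝ) (hσ : 0 < σ) (p : ℕ) (hp : 2 ≤ p)
    (Z : Fin p → Ω → ℝ) (hmeas : ∀ i, Measurable (Z i))
    (hindep : iIndepFun Z μ)
    (hdist : ∀ i, μ.map (Z i) = gaussianReal 0 ⟨σ ^ 2, sq_nonneg σ⟩)
    (t : ℝ) (ht : t ∈ Set.Icc (0 : ℝ) 1) :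
    μ {ω | (1 - stdNormalCDF (V1 p (fun i => Z i ω) / σ)) /
            (1 - stdNormalCDF (V2 p (fun i => Z i ω) / σ)) ≤ t}
      = ENNReal.ofReal t := by
  change μ {ω | spacingStat σ (fun i => Z i ω) ≤ t} = _
  obtain ⟨n, rfl⟩ : ∃ n, p = n + 1 := ⟨p - 1, by omega⟩
  have hY : HasLaw (fun ω i => twoSidedPValue (Z i ω / σ)) (Measure.pi fun _ => uniformIoc) μ :=
    (hindep.comp (fun _ z => twoSidedPValue (z / σ))
      fun _ => measurable_twoSidedPValue.comp (measurable_div_const σ)).hasLaw_pi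
      fun i => hasLaw_twoSidedPValue_div hσ rfl ⟨(hmeas i).aemeasurable, hdist i⟩
  obtain ⟨ht0, ht1⟩ := ht
  rcases ht0.eq_or_lt with rfl | ht0
  · simp [(spacingStat_pos σ _).not_ge]
  rcases ht1.lt_or_eq with ht1 | rfl
  · simp_rw [spacingStat_le_iff hσ hp _ ht0.le ht1]
    rw [hY.measure_eq (p := fun v => ∃ i, ∀ j ≠ i, v i ≤ t * v j)
      (measurableSet_exists_forall_ne_le_mul t),
      pi_uniformIoc_exists_forall_ne_le_mul (by omega) ht0 ht1]
  · have := hindep.isProbabilityMeasure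
    simp [spacingStat_le_one hσ hp]

/-- The spacing test statistic `(1 − Φ(V₁/σ))/(1 − Φ(V₂/σ))` of i.i.d. `N(0, σ²)` variables
is exactly `Unif(0,1)` distributed. -/
theorem stmt0 {Ω : Type*} [MeasurableSpace Ω] (μ : Measure Ω) [IsProbabilityMeasure μ]
    (σ : ℝ) (hσ : 0 < σ) (p : ℕ) (hp : 2 ≤ p)
    (Z : Fin p → Ω → ℝ) (hmeas : ∀ i, Measurable (Z i))
    (hindep : iIndepFun Z μ)
    (hdist : ∀ i, μ.map (Z i) = gaussianReal 0 ⟨σ ^ 2, sq_nonneg σ⟩)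
    (t : ℝ) (ht : t ∈ Set.Icc (0 : ℝ) 1) :
    μ {ω | (1 - stdNormalCDF (V1 p (fun i => Z i ω) / σ)) /
            (1 - stdNormalCDF (V2 p (fun i => Z i ω) / σ)) ≤ t}
      = ENNReal.ofReal t :=
  stmt0_general μ σ hσ p hp Z hmeas hindep hdist t ht
end

section
/- As p → ∞, the standard normal quantile a_p = Φ^{-1}(1 − 1/(2p)) admits the expansion a_p = √(2 log p) − (log log p + log π)/(2 √(2 log p)) + o(1/√(log p)); equivalently, √(log p) · ( Φ^{-1}(1 − 1/(2p)) − √(2 log p) + (log log p + log π)/(2 √(2 log p)) ) → 0 as p → ∞. -/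
/-! Mills' inequalities `x / (1 + x²) · φ(x) ≤ 1 - Φ(x) ≤ φ(x) / x` give
`log (1 - Φ(x)) = -x²/2 - log (√(2π) x) + o(1)` as `x → ∞`. At
`x_r = √(2L) - (log L + log π) / (2√(2L)) + r / √L` this makes
`log (2p (1 - Φ(x_r))) → -r√2` when `L = log p → ∞`, so for every `ε > 0` the quantile
`a_p` eventually lies strictly between `x_{-ε}` and `x_ε` by monotonicity of `Φ`. -/

open MeasureTheory ProbabilityTheory Filter Real

open Set Topology

lemma gaussianPDFReal_zero_one (t : ℝ) :
    gaussianPDFReal 0 1 t = (√(2 * π))⁻¹ * exp (-t ^ 2 / 2) := by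
  simp [gaussianPDFReal]

lemma one_sub_stdNormalCDF_eq_integral (x : ℝ) :
    1 - stdNormalCDF x = (√(2 * π))⁻¹ * ∫ t in Ioi x, exp (-t ^ 2 / 2) := by
  have htail : (gaussianReal 0 1).real (Ioi x) = 1 - stdNormalCDF x := by
    rw [← compl_Iic, probReal_compl_eq_one_sub measurableSet_Iic]; rfl
  rw [← htail, measureReal_def, gaussianReal_apply_eq_integral 0 one_ne_zero,
    ENNReal.toReal_ofReal (integral_nonneg fun t => gaussianPDFReal_nonneg 0 1 t),
    ← integral_const_mul]
  simp only [gaussianPDFReal_zero_one]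

lemma integrable_exp_neg_sq_div_two : Integrable fun t : ℝ => exp (-t ^ 2 / 2) := by
  simpa [neg_div, div_eq_inv_mul] using integrable_exp_neg_mul_sq (b := 1 / 2) (by norm_num)

lemma integrable_mul_exp_neg_sq_div_two : Integrable fun t : ℝ => t * exp (-t ^ 2 / 2) := by
  simpa [neg_div, div_eq_inv_mul] using
    integrable_rpow_mul_exp_neg_mul_sq (b := 1 / 2) (s := 1) (by norm_num) (by norm_num)

lemma hasDerivAt_exp_neg_sq_div_two (t : ℝ) :
    HasDerivAt (fun u : ℝ => exp (-u ^ 2 / 2)) (-t * exp (-t ^ 2 / 2)) t := by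
  have h : HasDerivAt (fun u : ℝ => -u ^ 2 / 2) (-t) t :=
    ((hasDerivAt_pow 2 t).fun_neg.div_const 2).congr_deriv (by push_cast; ring)
  simpa [mul_comm] using h.exp

lemma tendsto_exp_neg_sq_div_two : Tendsto (fun t : ℝ => exp (-t ^ 2 / 2)) atTop (𝓝 0) := by
  refine tendsto_exp_atBot.comp ?_
  have := (tendsto_pow_atTop (α := ℝ) two_ne_zero).atTop_div_const (two_pos : (0 : ℝ) < 2)
  simpa only [neg_div] using tendsto_neg_atBot_iff.mpr this

lemma integral_Ioi_mul_exp_neg_sq_div_two (x : ℝ) :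
    ∫ t in Ioi x, t * exp (-t ^ 2 / 2) = exp (-x ^ 2 / 2) := by
  simpa using integral_Ioi_of_hasDerivAt_of_tendsto' (a := x)
    (fun t _ => by simpa using (hasDerivAt_exp_neg_sq_div_two t).fun_neg)
    integrable_mul_exp_neg_sq_div_two.integrableOn tendsto_exp_neg_sq_div_two.neg

lemma integral_Ioi_exp_neg_sq_div_two_le {x : ℝ} (hx : 0 < x) :
    ∫ t in Ioi x, exp (-t ^ 2 / 2) ≤ x⁻¹ * exp (-x ^ 2 / 2) := by
  rw [← integral_Ioi_mul_exp_neg_sq_div_two, ← integral_const_mul]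
  refine setIntegral_mono_on integrable_exp_neg_sq_div_two.integrableOn
    (integrable_mul_exp_neg_sq_div_two.const_mul _).integrableOn measurableSet_Ioi
    fun t ht => ?_
  rw [← mul_assoc]
  exact le_mul_of_one_le_left (exp_pos _).le ((one_le_inv_mul₀ hx).2 (le_of_lt ht))

lemma hasDerivAt_neg_inv_mul_exp_neg_sq_div_two {t : ℝ} (ht : t ≠ 0) :
    HasDerivAt (fun u : ℝ => -u⁻¹ * exp (-u ^ 2 / 2))
      ((1 + (t ^ 2)⁻¹) * exp (-t ^ 2 / 2)) t := by
  refine ((hasDerivAt_inv ht).fun_neg.mul (hasDerivAt_exp_neg_sq_div_two t)).congr_deriv ?_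
  field_simp
  ring

lemma inv_mul_exp_neg_sq_div_two_le_mul_integral_Ioi {x : ℝ} (hx : 0 < x) :
    x⁻¹ * exp (-x ^ 2 / 2) ≤ (1 + (x ^ 2)⁻¹) * ∫ t in Ioi x, exp (-t ^ 2 / 2) := by
  have hbound : ∀ t ∈ Ioi x,
      (1 + (t ^ 2)⁻¹) * exp (-t ^ 2 / 2) ≤ (1 + (x ^ 2)⁻¹) * exp (-t ^ 2 / 2) := by
    intro t ht
    gcongr
    exact le_of_lt ht
  have hint : IntegrableOn (fun t => (1 + (t ^ 2)⁻¹) * exp (-t ^ 2 / 2)) (Ioi x) := by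
    refine ((integrable_exp_neg_sq_div_two.const_mul (1 + (x ^ 2)⁻¹)).integrableOn).mono'
      (by fun_prop) ?_
    refine (ae_restrict_iff' measurableSet_Ioi).2 (ae_of_all _ fun t ht => ?_)
    rw [Real.norm_of_nonneg (by positivity)]
    exact hbound t ht
  have hderiv := integral_Ioi_of_hasDerivAt_of_tendsto' (a := x)
    (fun t ht => hasDerivAt_neg_inv_mul_exp_neg_sq_div_two (hx.trans_le ht).ne') hint
    (by simpa using (tendsto_inv_atTop_zero.neg.mul tendsto_exp_neg_sq_div_two))
  rw [← integral_const_mul]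
  calc x⁻¹ * exp (-x ^ 2 / 2) = ∫ t in Ioi x, (1 + (t ^ 2)⁻¹) * exp (-t ^ 2 / 2) := by
        rw [hderiv]; ring
    _ ≤ _ := setIntegral_mono_on hint (integrable_exp_neg_sq_div_two.const_mul _).integrableOn
        measurableSet_Ioi hbound

lemma stdNormalCDF_mono : Monotone stdNormalCDF := fun _ _ h =>
  ENNReal.toReal_mono (measure_ne_top _ _) (measure_mono (Iic_subset_Iic.2 h))

lemma one_sub_stdNormalCDF_pos (x : ℝ) : 0 < 1 - stdNormalCDF x := by
  rw [one_sub_stdNormalCDF_eq_integral]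
  refine mul_pos (by positivity) ?_
  rw [setIntegral_pos_iff_support_of_nonneg_ae (ae_of_all _ fun t => (exp_pos _).le)
    integrable_exp_neg_sq_div_two.integrableOn]
  simp [Function.support, (exp_pos _).ne']

lemma antitone_log_one_sub_stdNormalCDF : Antitone fun x => log (1 - stdNormalCDF x) :=
  fun _ y h => log_le_log (one_sub_stdNormalCDF_pos y) (by linarith [stdNormalCDF_mono h])

/-- `exp (-tailExponent x) = φ(x) / x`, the Mills-ratio approximation of `1 - Φ(x)`. -/
noncomputable def tailExponent (x : ℝ) : ℝ := x ^ 2 / 2 + log (√(2 * π) * x)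

lemma exp_neg_tailExponent {x : ℝ} (hx : 0 < x) :
    exp (-tailExponent x) = (√(2 * π))⁻¹ * (x⁻¹ * exp (-x ^ 2 / 2)) := by
  rw [tailExponent, neg_add, exp_add, exp_neg (log _), exp_log (by positivity), neg_div, mul_inv]
  ring

lemma one_sub_stdNormalCDF_le_exp_neg_tailExponent {x : ℝ} (hx : 0 < x) :
    1 - stdNormalCDF x ≤ exp (-tailExponent x) := by
  rw [one_sub_stdNormalCDF_eq_integral, exp_neg_tailExponent hx]
  gcongr
  exact integral_Ioi_exp_neg_sq_div_two_le hx

lemma exp_neg_tailExponent_le_mul_one_sub_stdNormalCDF {x : ℝ} (hx : 0 < x) :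
    exp (-tailExponent x) ≤ (1 + (x ^ 2)⁻¹) * (1 - stdNormalCDF x) := by
  rw [one_sub_stdNormalCDF_eq_integral, exp_neg_tailExponent hx, mul_left_comm _ (√(2 * π))⁻¹]
  exact mul_le_mul_of_nonneg_left (inv_mul_exp_neg_sq_div_two_le_mul_integral_Ioi hx)
    (by positivity)

lemma tendsto_log_one_sub_stdNormalCDF_add_tailExponent :
    Tendsto (fun x => log (1 - stdNormalCDF x) + tailExponent x) atTop (𝓝 0) := by
  have hlower : Tendsto (fun x : ℝ => -log (1 + (x ^ 2)⁻¹)) atTop (𝓝 0) := by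
    simpa using ((tendsto_const_nhds.add (tendsto_inv_atTop_zero.comp
      (tendsto_pow_atTop two_ne_zero))).log (by norm_num : (1 : ℝ) + 0 ≠ 0)).neg
  refine tendsto_of_tendsto_of_tendsto_of_le_of_le' hlower tendsto_const_nhds ?_ ?_
  · filter_upwards [eventually_gt_atTop 0] with x hx
    have := (le_log_iff_exp_le (by positivity [one_sub_stdNormalCDF_pos x])).2
      (exp_neg_tailExponent_le_mul_one_sub_stdNormalCDF hx)
    rw [log_mul (by positivity) (one_sub_stdNormalCDF_pos x).ne'] at this
    linarith
  · filter_upwards [eventually_gt_atTop 0] with x hx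
    have := (log_le_iff_le_exp (one_sub_stdNormalCDF_pos x)).2
      (one_sub_stdNormalCDF_le_exp_neg_tailExponent hx)
    linarith

lemma tailExponent_add_div {s d : ℝ} (hs : 0 < s) (hd : 0 < 1 + d / s ^ 2) :
    tailExponent (s + d / s) =
      s ^ 2 / 2 + d + (d / s) ^ 2 / 2 + log (√(2 * π) * s) + log (1 + d / s ^ 2) := by
  have hx : √(2 * π) * (s + d / s) = √(2 * π) * s * (1 + d / s ^ 2) := by
    field_simp
  rw [tailExponent, hx, log_mul (by positivity) hd.ne']
  field_simp
  ring

/-- The approximation `x_r` of `Φ⁻¹(1 - 1/(2p))` from the header, written in `L = log p`. -/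
noncomputable def quantileApprox (r L : ℝ) : ℝ :=
  √(2 * L) - (log L + log π) / (2 * √(2 * L)) + r / √L

lemma quantileApprox_eq {L : ℝ} (r : ℝ) (hL : 0 < L) :
    quantileApprox r L = √(2 * L) + (r * √2 - (log L + log π) / 2) / √(2 * L) := by
  rw [quantileApprox, sqrt_mul zero_le_two]
  field_simp
  ring

lemma tendsto_log_div_sqrt_atTop : Tendsto (fun L => log L / √L) atTop (𝓝 0) := by
  simpa only [sqrt_eq_rpow] using (isLittleO_log_rpow_atTop one_half_pos).tendsto_div_nhds_zero

lemma tendsto_quantileApprox_correction (r : ℝ) :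
    Tendsto (fun L => (r * √2 - (log L + log π) / 2) / √(2 * L)) atTop (𝓝 0) := by
  have hinv : Tendsto (fun L : ℝ => (√L)⁻¹) atTop (𝓝 0) :=
    tendsto_inv_atTop_zero.comp tendsto_sqrt_atTop
  have := ((hinv.const_mul (r * √2 - log π / 2)).sub
    (tendsto_log_div_sqrt_atTop.div_const 2)).div_const √2
  simp only [mul_zero, zero_div, sub_zero] at this
  refine this.congr' ?_
  filter_upwards [eventually_gt_atTop 0] with L hL
  rw [sqrt_mul zero_le_two]
  field_simp
  ring

lemma tendsto_tailExponent_quantileApprox (r : ℝ) :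
    Tendsto (fun L => tailExponent (quantileApprox r L) - L - log 2) atTop (𝓝 (r * √2)) := by
  set q := fun L => (r * √2 - (log L + log π) / 2) / √(2 * L)
  have hq : Tendsto q atTop (𝓝 0) := tendsto_quantileApprox_correction r
  have hqs : Tendsto (fun L => q L / √(2 * L)) atTop (𝓝 0) := by
    simpa [div_eq_mul_inv] using hq.mul (tendsto_inv_atTop_zero.comp
      (tendsto_sqrt_atTop.comp (tendsto_id.const_mul_atTop two_pos)))
  have hlim : Tendsto (fun L => r * √2 + q L ^ 2 / 2 + log (1 + q L / √(2 * L))) atTop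
      (𝓝 (r * √2)) := by
    simpa using ((hq.pow 2).div_const 2).const_add (r * √2) |>.add
      ((hqs.const_add 1).log (by norm_num))
  refine hlim.congr' ?_
  filter_upwards [eventually_gt_atTop 0,
    hqs.eventually (eventually_gt_nhds (by norm_num : (-1 : ℝ) < 0))] with L hL hqL
  have hs : 0 < √(2 * L) := by positivity
  have hd : q L / √(2 * L) = (r * √2 - (log L + log π) / 2) / √(2 * L) ^ 2 := by
    rw [sq, ← div_div]
  have hlog : log (√(2 * π) * √(2 * L)) = log 2 + (log L + log π) / 2 := by
    rw [log_mul (by positivity) hs.ne', log_sqrt (by positivity), log_sqrt (by positivity),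
      log_mul two_ne_zero pi_pos.ne', log_mul two_ne_zero hL.ne']
    ring
  rw [quantileApprox_eq r hL, tailExponent_add_div hs (hd ▸ by linarith), ← hd, hlog,
    sq_sqrt (by positivity)]
  ring

lemma tendsto_quantileApprox_atTop (r : ℝ) : Tendsto (quantileApprox r) atTop atTop := by
  refine ((tendsto_sqrt_atTop.comp (tendsto_id.const_mul_atTop two_pos)).atTop_add
    (tendsto_quantileApprox_correction r)).congr' ?_
  filter_upwards [eventually_gt_atTop 0] with L hL using (quantileApprox_eq r hL).symm

lemma tendsto_log_one_sub_stdNormalCDF_quantileApprox (r : ℝ) :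
    Tendsto (fun L => log (1 - stdNormalCDF (quantileApprox r L)) + L + log 2) atTop
      (𝓝 (-(r * √2))) := by
  have := (tendsto_log_one_sub_stdNormalCDF_add_tailExponent.comp
    (tendsto_quantileApprox_atTop r)).sub (tendsto_tailExponent_quantileApprox r)
  rw [zero_sub] at this
  exact this.congr fun L => by simp only [Function.comp_apply]; ring

/-- The standard normal quantile `a_p = Φ⁻¹(1 − 1/(2p))` satisfies
`a_p = √(2 log p) − (log log p + log π)/(2√(2 log p)) + o(1/√(log p))`. -/
theorem stmt3 (a : ℕ → ℝ) (ha : ∀ p : ℕ, 2 ≤ p → stdNormalCDF (a p) = 1 - 1 / (2 * (p : ℝ))) :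
    Tendsto
      (fun p : ℕ =>
        Real.sqrt (Real.log p) *
          (a p - Real.sqrt (2 * Real.log p) +
            (Real.log (Real.log p) + Real.log π) / (2 * Real.sqrt (2 * Real.log p))))
      atTop (nhds 0) := by
  rw [NormedAddGroup.tendsto_nhds_zero]
  intro ε hε
  have hlog : Tendsto (fun p : ℕ => log p) atTop atTop :=
    tendsto_log_atTop.comp tendsto_natCast_atTop_atTop
  have hε2 : 0 < ε * √2 := mul_pos hε (sqrt_pos.2 two_pos)
  have hup := (tendsto_log_one_sub_stdNormalCDF_quantileApprox ε).eventually_lt_const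
    (show -(ε * √2) < 0 by linarith)
  have hlo := (tendsto_log_one_sub_stdNormalCDF_quantileApprox (-ε)).eventually_const_lt
    (show 0 < -(-ε * √2) by linarith)
  filter_upwards [hlog.eventually hup, hlog.eventually hlo, hlog.eventually_gt_atTop 0,
    eventually_ge_atTop 2] with p hup hlo hL hp
  have hap : log (1 - stdNormalCDF (a p)) + log p + log 2 = 0 := by
    rw [ha p hp, sub_sub_cancel, one_div, log_inv, log_mul two_ne_zero (by positivity)]
    ring
  have h1 : a p < quantileApprox ε (log p) :=
    antitone_log_one_sub_stdNormalCDF.reflect_lt (by linarith)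
  have h2 : quantileApprox (-ε) (log p) < a p :=
    antitone_log_one_sub_stdNormalCDF.reflect_lt (by linarith)
  have hsL : 0 < √(log p) := sqrt_pos.2 hL
  rw [quantileApprox] at h1 h2
  rw [neg_div] at h2
  rw [norm_mul, norm_of_nonneg hsL.le, Real.norm_eq_abs, ← lt_div_iff₀' hsL, abs_lt]
  constructor <;> linarith
end
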